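/- arXiv:2512.08756 — 3 statements merged into one kernel-verified Lean document; each statement's English description precedes it below -/
import Mathlib

section
/- Let S_1, ..., S_W be symmetric q×q real matrices and a_1, ..., a_W real numbers with ∑ a_w² > 0. Define S = (∑ a_w²)⁻¹ ∑ a_w S_w with eigendecomposition S = U Λ Uᵀ. Then the minimizer over positive semidefinite matrices Σ of ∑_w ‖S_w − a_w Σ‖_F² is Σ̂ = U Λ⁺ Uᵀ, where Λ⁺ replaces each eigenvalue λ_j by max(λ_j, 0). -/
/-! Completing the square entrywise splits the objective as
`∑ ‖S_w − a_w Σ‖² = ∑ ‖S_w − a_w S̄‖² + (∑ a_w²) ‖Σ − S̄‖²`, so one needs the positive semidefinite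
matrix nearest to `S̄`. Conjugation by the orthogonal `U` preserves the Frobenius norm and
semidefiniteness and turns `S̄` into `Λ`; for semidefinite `N` the diagonal entries are nonnegative,
so `‖N − Λ‖² ≥ ∑ (N_jj − λ_j)² ≥ ∑ (max(λ_j, 0) − λ_j)² = ‖Λ⁺ − Λ‖²`. -/

open Matrix BigOperators

def frobSq {m n : ℕ} (A : Matrix (Fin m) (Fin n) ℝ) : ℝ := ∑ i, ∑ j, (A i j) ^ 2

lemma sum_sq_sub_mul_eq_add {ι : Type*} [Fintype ι] (a s : ι → ℝ) (ha : ∑ w, a w ^ 2 ≠ 0)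
    (x : ℝ) :
    ∑ w, (s w - a w * x) ^ 2 =
      ∑ w, (s w - a w * ((∑ w, a w ^ 2)⁻¹ * ∑ w, a w * s w)) ^ 2 +
        (∑ w, a w ^ 2) * (x - (∑ w, a w ^ 2)⁻¹ * ∑ w, a w * s w) ^ 2 := by
  set c := (∑ w, a w ^ 2)⁻¹ * ∑ w, a w * s w
  have hc : ∑ w, a w * s w = (∑ w, a w ^ 2) * c := by simp only [c]; field_simp
  have expand : ∀ y, ∑ w, (s w - a w * y) ^ 2 =
      ∑ w, s w ^ 2 - 2 * y * ∑ w, a w * s w + y ^ 2 * ∑ w, a w ^ 2 := fun y => by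
    simp only [Finset.mul_sum, ← Finset.sum_sub_distrib, ← Finset.sum_add_distrib]
    exact Finset.sum_congr rfl fun w _ => by ring
  rw [expand, expand]
  linear_combination 2 * (c - x) * hc

lemma sum_frobSq_comm {ι : Type*} [Fintype ι] {m n : ℕ} (F : ι → Matrix (Fin m) (Fin n) ℝ) :
    ∑ w, frobSq (F w) = ∑ i, ∑ j, ∑ w, (F w i j) ^ 2 := by
  unfold frobSq
  rw [Finset.sum_comm]
  exact Finset.sum_congr rfl fun _ _ => Finset.sum_comm

lemma sum_frobSq_sub_smul_eq_add {ι : Type*} [Fintype ι] {m n : ℕ}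
    (S : ι → Matrix (Fin m) (Fin n) ℝ) (a : ι → ℝ) (ha : ∑ w, a w ^ 2 ≠ 0)
    (M : Matrix (Fin m) (Fin n) ℝ) :
    ∑ w, frobSq (S w - a w • M) =
      ∑ w, frobSq (S w - a w • ((∑ w, a w ^ 2)⁻¹ • ∑ w, a w • S w)) +
        (∑ w, a w ^ 2) * frobSq (M - (∑ w, a w ^ 2)⁻¹ • ∑ w, a w • S w) := by
  rw [sum_frobSq_comm, sum_frobSq_comm, frobSq, Finset.mul_sum, ← Finset.sum_add_distrib]
  refine Finset.sum_congr rfl fun i _ => ?_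
  rw [Finset.mul_sum, ← Finset.sum_add_distrib]
  refine Finset.sum_congr rfl fun j _ => ?_
  simp only [Matrix.sub_apply, Matrix.smul_apply, Matrix.sum_apply, smul_eq_mul]
  exact sum_sq_sub_mul_eq_add a (fun w => S w i j) ha (M i j)

lemma frobSq_eq_trace_transpose_mul {m n : ℕ} (A : Matrix (Fin m) (Fin n) ℝ) :
    frobSq A = (Aᵀ * A).trace := by
  simp only [frobSq, trace, diag, mul_apply, transpose_apply, sq]
  exact Finset.sum_comm

lemma frobSq_transpose {m n : ℕ} (A : Matrix (Fin m) (Fin n) ℝ) : frobSq Aᵀ = frobSq A :=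
  Finset.sum_comm

lemma frobSq_orthogonal_mul {m n : ℕ} {U : Matrix (Fin m) (Fin m) ℝ} (hU : Uᵀ * U = 1)
    (X : Matrix (Fin m) (Fin n) ℝ) : frobSq (U * X) = frobSq X := by
  rw [frobSq_eq_trace_transpose_mul, frobSq_eq_trace_transpose_mul, transpose_mul,
    Matrix.mul_assoc, ← Matrix.mul_assoc Uᵀ, hU, Matrix.one_mul]

lemma frobSq_orthogonal_conj {n : ℕ} {U : Matrix (Fin n) (Fin n) ℝ} (hU : Uᵀ * U = 1)
    (X : Matrix (Fin n) (Fin n) ℝ) : frobSq (U * X * Uᵀ) = frobSq X := by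
  rw [Matrix.mul_assoc, frobSq_orthogonal_mul hU, ← frobSq_transpose, transpose_mul,
    transpose_transpose, frobSq_orthogonal_mul hU, frobSq_transpose]

lemma frobSq_diagonal {n : ℕ} (v : Fin n → ℝ) : frobSq (diagonal v) = ∑ j, (v j) ^ 2 := by
  refine Finset.sum_congr rfl fun i _ => ?_
  rw [Finset.sum_eq_single i (fun j _ hj => by simp [diagonal_apply_ne' _ hj]) (by simp),
    diagonal_apply_eq]

lemma sum_sq_diag_le_frobSq {n : ℕ} (A : Matrix (Fin n) (Fin n) ℝ) :
    ∑ i, (A i i) ^ 2 ≤ frobSq A :=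
  Finset.sum_le_sum fun i _ =>
    Finset.single_le_sum (f := fun j => (A i j) ^ 2) (fun _ _ => sq_nonneg _) (Finset.mem_univ i)

lemma sq_max_zero_sub_le {x y : ℝ} (hy : 0 ≤ y) : (max x 0 - x) ^ 2 ≤ (y - x) ^ 2 := by
  rcases le_total x 0 with hx | hx
  · rw [max_eq_right hx]; nlinarith
  · rw [max_eq_left hx, sub_self, zero_pow two_ne_zero]; exact sq_nonneg _

lemma frobSq_posPart_sub_le {n : ℕ} {U : Matrix (Fin n) (Fin n) ℝ} (hU : Uᵀ * U = 1)
    (d : Fin n → ℝ) {M : Matrix (Fin n) (Fin n) ℝ} (hM : M.PosSemidef) :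
    frobSq (U * diagonal (fun j => max (d j) 0) * Uᵀ - U * diagonal d * Uᵀ) ≤
      frobSq (M - U * diagonal d * Uᵀ) := by
  have hUt : Uᵀᵀ * Uᵀ = 1 := by rw [transpose_transpose]; exact mul_eq_one_comm.mp hU
  set N := Uᵀ * M * U
  have hN : N.PosSemidef := by
    simpa [conjTranspose_eq_transpose_of_trivial] using hM.mul_mul_conjTranspose_same Uᵀ
  have hUdU : Uᵀ * (U * diagonal d * Uᵀ) * U = diagonal d := by
    simp only [Matrix.mul_assoc, hU, Matrix.mul_one]
    rw [← Matrix.mul_assoc, hU, Matrix.one_mul]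
  have hM_conj : frobSq (M - U * diagonal d * Uᵀ) = frobSq (N - diagonal d) := by
    rw [← frobSq_orthogonal_conj hUt, transpose_transpose, Matrix.mul_sub, Matrix.sub_mul, hUdU]
  calc frobSq (U * diagonal (fun j => max (d j) 0) * Uᵀ - U * diagonal d * Uᵀ)
      = ∑ j, (max (d j) 0 - d j) ^ 2 := by
        rw [← Matrix.sub_mul, ← Matrix.mul_sub, frobSq_orthogonal_conj hU, diagonal_sub,
          frobSq_diagonal]
    _ ≤ ∑ j, (N j j - d j) ^ 2 :=
        Finset.sum_le_sum fun j _ => sq_max_zero_sub_le hN.diag_nonneg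
    _ = ∑ j, ((N - diagonal d) j j) ^ 2 := by simp
    _ ≤ frobSq (M - U * diagonal d * Uᵀ) := hM_conj ▸ sum_sq_diag_le_frobSq _

theorem stmt0_general {q W : ℕ}
    (S : Fin W → Matrix (Fin q) (Fin q) ℝ) (a : Fin W → ℝ)
    (ha : 0 < ∑ w, (a w) ^ 2)
    (Sbar : Matrix (Fin q) (Fin q) ℝ)
    (hSbar : Sbar = (∑ w, (a w) ^ 2)⁻¹ • ∑ w, a w • S w)
    (U : Matrix (Fin q) (Fin q) ℝ) (d : Fin q → ℝ)
    (hU : Uᵀ * U = 1)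
    (hdecomp : Sbar = U * Matrix.diagonal d * Uᵀ) :
    (U * Matrix.diagonal (fun j => max (d j) 0) * Uᵀ).PosSemidef ∧
    ∀ M : Matrix (Fin q) (Fin q) ℝ, M.PosSemidef →
      ∑ w, frobSq (S w - a w • (U * Matrix.diagonal (fun j => max (d j) 0) * Uᵀ)) ≤
        ∑ w, frobSq (S w - a w • M) := by
  refine ⟨?_, fun M hM => ?_⟩
  · simpa [conjTranspose_eq_transpose_of_trivial] using
      (posSemidef_diagonal_iff.mpr fun j => le_max_right (d j) 0).mul_mul_conjTranspose_same U
  · rw [sum_frobSq_sub_smul_eq_add S a ha.ne', sum_frobSq_sub_smul_eq_add S a ha.ne' M, ← hSbar]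
    gcongr
    rw [hdecomp]
    exact frobSq_posPart_sub_le hU d hM

/-- the minimizer over PSD matrices `M` of `∑ w ‖S w − a w • M‖_F²` is
`U Λ⁺ Uᵀ`, obtained by truncating the eigenvalues of
`S̄ = (∑ a_w²)⁻¹ ∑ a_w S_w = U Λ Uᵀ` at zero. -/
theorem stmt0 {q W : ℕ}
    (S : Fin W → Matrix (Fin q) (Fin q) ℝ) (a : Fin W → ℝ)
    (hSymm : ∀ w, (S w).IsSymm)
    (ha : 0 < ∑ w, (a w) ^ 2)
    (Sbar : Matrix (Fin q) (Fin q) ℝ)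
    (hSbar : Sbar = (∑ w, (a w) ^ 2)⁻¹ • ∑ w, a w • S w)
    (U : Matrix (Fin q) (Fin q) ℝ) (d : Fin q → ℝ)
    (hU : Uᵀ * U = 1)
    (hdecomp : Sbar = U * Matrix.diagonal d * Uᵀ) :
    (U * Matrix.diagonal (fun j => max (d j) 0) * Uᵀ).PosSemidef ∧
    ∀ M : Matrix (Fin q) (Fin q) ℝ, M.PosSemidef →
      ∑ w, frobSq (S w - a w • (U * Matrix.diagonal (fun j => max (d j) 0) * Uᵀ)) ≤
        ∑ w, frobSq (S w - a w • M) :=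
  stmt0_general S a ha Sbar hSbar U d hU hdecomp
end

section
/- Let Y be an n×q real matrix with compact singular value decomposition Y = U D Vᵀ, where V has orthonormal columns spanning the row space of Y. For fixed n×n symmetric matrices D_0, ..., D_K, if (Σ̃_0, ..., Σ̃_K) minimizes ∑_{i,l} ‖(YV)_{i,:}ᵀ (YV)_{l,:} − ∑_k [D_k]_{i,l} Σ_k‖_F² over PSD matrices Σ_k, then (V Σ̃_0 Vᵀ, ..., V Σ̃_K Vᵀ) minimizes the analogous objective ∑_{i,l} ‖Y_{i,:}ᵀ Y_{l,:} − ∑_k [D_k]_{i,l} Σ_k‖_F² over PSD q×q matrices Σ_k. -/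
open Matrix BigOperators

/-- The mvREHE objective `∑_{i,l} ‖Y_{i,:}ᵀ Y_{l,:} − ∑_k [D_k]_{i,l} Σ_k‖_F²`. -/
def mvObj {n q K : ℕ} (Y : Matrix (Fin n) (Fin q) ℝ)
    (D : Fin (K + 1) → Matrix (Fin n) (Fin n) ℝ)
    (Sig : Fin (K + 1) → Matrix (Fin q) (Fin q) ℝ) : ℝ :=
  ∑ i, ∑ l, frobSq (Matrix.of (fun a b => Y i a * Y l b) - ∑ k, D k i l • Sig k)

/-! Writing `P = V Vᵀ` for the orthogonal projection onto the column space of `V`, the rows of `Y`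
lie in that space, so `Y = (Y V) Vᵀ`. The map `Σ ↦ V Σ Vᵀ` is then a Frobenius isometry that
carries the residuals of the `Y V` problem at `Σ` to the residuals of the `Y` problem at
`V Σ Vᵀ`, so both objectives agree there. Conversely `Σ ↦ Vᵀ Σ V` carries residuals `R` of the
`Y` problem to `Vᵀ R V`, and `‖Vᵀ R V‖_F = ‖P R P‖_F ≤ ‖R‖_F`. Both maps preserve positive
semidefiniteness, so the optimum of the `Y V` problem transported by `V` beats every competitor. -/

section Frobenius

variable {m n q r : ℕ}

lemma frobSq_nonneg (A : Matrix (Fin m) (Fin n) ℝ) : 0 ≤ frobSq A :=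
  Finset.sum_nonneg fun _ _ => Finset.sum_nonneg fun _ _ => sq_nonneg _

lemma frobSq_eq_trace (A : Matrix (Fin m) (Fin n) ℝ) : frobSq A = trace (A * Aᵀ) := by
  simp [frobSq, trace, mul_apply, sq]

lemma frobSq_mul_mul_transpose {V : Matrix (Fin q) (Fin r) ℝ} (hV : Vᵀ * V = 1)
    (A : Matrix (Fin r) (Fin r) ℝ) : frobSq (V * A * Vᵀ) = frobSq A := by
  rw [frobSq_eq_trace, frobSq_eq_trace, transpose_mul, transpose_mul, transpose_transpose,
    show V * A * Vᵀ * (V * (Aᵀ * Vᵀ)) = V * (A * (Vᵀ * V) * Aᵀ) * Vᵀ by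
      simp only [Matrix.mul_assoc],
    hV, Matrix.mul_one, trace_mul_cycle, ← Matrix.mul_assoc, hV, Matrix.one_mul]

lemma frobSq_sub_mul_mul {P : Matrix (Fin q) (Fin q) ℝ} (hPt : Pᵀ = P) (hPP : P * P = P)
    (X : Matrix (Fin q) (Fin q) ℝ) : frobSq (X - P * X * P) = frobSq X - frobSq (P * X * P) := by
  have hBt : (P * X * P)ᵀ = P * Xᵀ * P := by rw [transpose_mul, transpose_mul, hPt, mul_assoc]
  have hcross : trace (X * (P * X * P)ᵀ) = frobSq (P * X * P) := by
    rw [frobSq_eq_trace, hBt]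
    calc trace (X * (P * Xᵀ * P)) = trace (X * P * Xᵀ * (P * P)) := by
          rw [hPP]; simp only [Matrix.mul_assoc]
      _ = trace (P * (X * P * Xᵀ * P)) := by rw [trace_mul_comm P]; simp only [Matrix.mul_assoc]
      _ = trace (P * X * (P * P) * Xᵀ * P) := by rw [hPP]; simp only [Matrix.mul_assoc]
      _ = trace (P * X * P * (P * Xᵀ * P)) := by simp only [Matrix.mul_assoc]
  have hcross_transpose : trace (P * X * P * Xᵀ) = trace (X * (P * X * P)ᵀ) := by
    rw [← trace_transpose, transpose_mul, transpose_transpose, trace_mul_comm]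
  rw [frobSq_eq_trace (X - _), transpose_sub, sub_mul, mul_sub, mul_sub, trace_sub, trace_sub,
    trace_sub, hcross_transpose, hcross, ← frobSq_eq_trace, ← frobSq_eq_trace]
  ring

lemma frobSq_mul_mul_le {P : Matrix (Fin q) (Fin q) ℝ} (hPt : Pᵀ = P) (hPP : P * P = P)
    (X : Matrix (Fin q) (Fin q) ℝ) : frobSq (P * X * P) ≤ frobSq X := by
  linarith [frobSq_sub_mul_mul hPt hPP X, frobSq_nonneg (X - P * X * P)]

lemma frobSq_transpose_mul_mul_le {V : Matrix (Fin q) (Fin r) ℝ} (hV : Vᵀ * V = 1)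
    (X : Matrix (Fin q) (Fin q) ℝ) : frobSq (Vᵀ * X * V) ≤ frobSq X := by
  have hPt : (V * Vᵀ)ᵀ = V * Vᵀ := by rw [transpose_mul, transpose_transpose]
  have hPP : V * Vᵀ * (V * Vᵀ) = V * Vᵀ := by
    rw [Matrix.mul_assoc, ← Matrix.mul_assoc Vᵀ, hV, Matrix.one_mul]
  calc frobSq (Vᵀ * X * V) = frobSq (V * Vᵀ * X * (V * Vᵀ)) := by
        rw [← frobSq_mul_mul_transpose hV]; simp only [Matrix.mul_assoc]
    _ ≤ frobSq X := frobSq_mul_mul_le hPt hPP X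

end Frobenius

section Objective

variable {n q r K : ℕ}

def mvResidual (Y : Matrix (Fin n) (Fin q) ℝ) (D : Fin (K + 1) → Matrix (Fin n) (Fin n) ℝ)
    (Sig : Fin (K + 1) → Matrix (Fin q) (Fin q) ℝ) (i l : Fin n) : Matrix (Fin q) (Fin q) ℝ :=
  vecMulVec (Y i) (Y l) - ∑ k, D k i l • Sig k

lemma mvObj_eq_sum_frobSq_mvResidual (Y : Matrix (Fin n) (Fin q) ℝ)
    (D : Fin (K + 1) → Matrix (Fin n) (Fin n) ℝ) (Sig : Fin (K + 1) → Matrix (Fin q) (Fin q) ℝ) :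
    mvObj Y D Sig = ∑ i, ∑ l, frobSq (mvResidual Y D Sig i l) := rfl

lemma vecMulVec_vecMul_vecMul {ι κ α : Type*} [Fintype ι] [CommSemiring α] (A : Matrix ι κ α)
    (x y : ι → α) : vecMulVec (x ᵥ* A) (y ᵥ* A) = Aᵀ * vecMulVec x y * A := by
  rw [mul_vecMulVec, vecMulVec_mul, mulVec_transpose]

lemma mvResidual_mul (Y : Matrix (Fin n) (Fin q) ℝ) (A : Matrix (Fin q) (Fin r) ℝ)
    (D : Fin (K + 1) → Matrix (Fin n) (Fin n) ℝ) (Sig : Fin (K + 1) → Matrix (Fin q) (Fin q) ℝ)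
    (i l : Fin n) :
    mvResidual (Y * A) D (fun k => Aᵀ * Sig k * A) i l = Aᵀ * mvResidual Y D Sig i l * A := by
  simp only [mvResidual, mul_apply_eq_vecMul, vecMulVec_vecMul_vecMul, Matrix.mul_sub,
    Matrix.sub_mul, Matrix.mul_sum, Matrix.sum_mul, Matrix.mul_smul, Matrix.smul_mul]

lemma mvObj_mul_transpose_mul_mul_le {V : Matrix (Fin q) (Fin r) ℝ} (hV : Vᵀ * V = 1)
    (Y : Matrix (Fin n) (Fin q) ℝ) (D : Fin (K + 1) → Matrix (Fin n) (Fin n) ℝ)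
    (Sig : Fin (K + 1) → Matrix (Fin q) (Fin q) ℝ) :
    mvObj (Y * V) D (fun k => Vᵀ * Sig k * V) ≤ mvObj Y D Sig := by
  simp only [mvObj_eq_sum_frobSq_mvResidual, mvResidual_mul]
  gcongr
  exact frobSq_transpose_mul_mul_le hV _

lemma mvObj_mul_mul_transpose {V : Matrix (Fin q) (Fin r) ℝ} (hV : Vᵀ * V = 1)
    {Y : Matrix (Fin n) (Fin q) ℝ} (hY : Y * V * Vᵀ = Y)
    (D : Fin (K + 1) → Matrix (Fin n) (Fin n) ℝ)
    (T : Fin (K + 1) → Matrix (Fin r) (Fin r) ℝ) :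
    mvObj Y D (fun k => V * T k * Vᵀ) = mvObj (Y * V) D T := by
  have hres := mvResidual_mul (Y * V) Vᵀ D T
  simp only [transpose_transpose, hY] at hres
  simp only [mvObj_eq_sum_frobSq_mvResidual, hres, frobSq_mul_mul_transpose hV]

end Objective

lemma mul_mul_transpose_eq_self_of_svd {n q r : ℕ} {Y : Matrix (Fin n) (Fin q) ℝ}
    {U : Matrix (Fin n) (Fin r) ℝ} {s : Fin r → ℝ} {V : Matrix (Fin q) (Fin r) ℝ}
    (hSVD : Y = U * diagonal s * Vᵀ) (hV : Vᵀ * V = 1) : Y * V * Vᵀ = Y := by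
  rw [hSVD, Matrix.mul_assoc (U * diagonal s), Matrix.mul_assoc, hV, Matrix.one_mul]

theorem stmt4_general {n q r K : ℕ}
    (Y : Matrix (Fin n) (Fin q) ℝ)
    (U : Matrix (Fin n) (Fin r) ℝ) (s : Fin r → ℝ) (V : Matrix (Fin q) (Fin r) ℝ)
    (hSVD : Y = U * Matrix.diagonal s * Vᵀ)
    (hV : Vᵀ * V = 1)
    (D : Fin (K + 1) → Matrix (Fin n) (Fin n) ℝ)
    (Stilde : Fin (K + 1) → Matrix (Fin r) (Fin r) ℝ)
    (hStildePSD : ∀ k, (Stilde k).PosSemidef)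
    (hStildeMin : ∀ Sig : Fin (K + 1) → Matrix (Fin r) (Fin r) ℝ,
      (∀ k, (Sig k).PosSemidef) → mvObj (Y * V) D Stilde ≤ mvObj (Y * V) D Sig) :
    (∀ k, (V * Stilde k * Vᵀ).PosSemidef) ∧
    ∀ Sig : Fin (K + 1) → Matrix (Fin q) (Fin q) ℝ,
      (∀ k, (Sig k).PosSemidef) →
      mvObj Y D (fun k => V * Stilde k * Vᵀ) ≤ mvObj Y D Sig := by
  refine ⟨fun k => by simpa using (hStildePSD k).mul_mul_conjTranspose_same V,
    fun Sig hSig => ?_⟩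
  calc mvObj Y D (fun k => V * Stilde k * Vᵀ)
      = mvObj (Y * V) D Stilde :=
        mvObj_mul_mul_transpose hV (mul_mul_transpose_eq_self_of_svd hSVD hV) D Stilde
    _ ≤ mvObj (Y * V) D (fun k => Vᵀ * Sig k * V) :=
        hStildeMin _ fun k => by simpa using (hSig k).conjTranspose_mul_mul_same V
    _ ≤ mvObj Y D Sig := mvObj_mul_transpose_mul_mul_le hV Y D Sig

/-- if `Y = U D Vᵀ` is a compact SVD (`V` with orthonormal columns), and
`(Σ̃_k)` minimizes the mvREHE objective for the data matrix `Y V` over tuples of PSD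
matrices, then `(V Σ̃_k Vᵀ)` minimizes the analogous objective for `Y` over tuples of
PSD `q × q` matrices. -/
theorem stmt4 {n q r K : ℕ}
    (Y : Matrix (Fin n) (Fin q) ℝ)
    (U : Matrix (Fin n) (Fin r) ℝ) (s : Fin r → ℝ) (V : Matrix (Fin q) (Fin r) ℝ)
    (hSVD : Y = U * Matrix.diagonal s * Vᵀ)
    (hV : Vᵀ * V = 1)
    (D : Fin (K + 1) → Matrix (Fin n) (Fin n) ℝ)
    (hD : ∀ k, (D k).IsSymm)
    (Stilde : Fin (K + 1) → Matrix (Fin r) (Fin r) ℝ)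
    (hStildePSD : ∀ k, (Stilde k).PosSemidef)
    (hStildeMin : ∀ Sig : Fin (K + 1) → Matrix (Fin r) (Fin r) ℝ,
      (∀ k, (Sig k).PosSemidef) → mvObj (Y * V) D Stilde ≤ mvObj (Y * V) D Sig) :
    (∀ k, (V * Stilde k * Vᵀ).PosSemidef) ∧
    ∀ Sig : Fin (K + 1) → Matrix (Fin q) (Fin q) ℝ,
      (∀ k, (Sig k).PosSemidef) →
      mvObj Y D (fun k => V * Stilde k * Vᵀ) ≤ mvObj Y D Sig :=
  stmt4_general Y U s V hSVD hV D Stilde hStildePSD hStildeMin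
end

section
/- In the model Y = ∑_{k=0}^{K} Γ_k with independent Γ_k ∼ MN(0, D_k, Σ_k), the column covariance matrices Σ_0, ..., Σ_K are identifiable from the covariance of vec(Y) if and only if the matrices D_0, ..., D_K are linearly independent. In particular, if K ≥ 1 and all D_k are equal, only the sum ∑_k Σ_k is identifiable. -/
/-!
The `(i, j)` block of `∑ k, Σ k ⊗ₖ D k` is `∑ k, (Σ k) i j • D k`, so linear
independence of the `D k` recovers every entry of every `Σ k`. Conversely, two
different coefficient tuples `c`, `c'` giving the same combination of the `D k`
yield the different symmetric tuples `c k • 1`, `c' k • 1` with the same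
covariance. Equal `D k` with `K ≥ 1` are dependent.
-/

open Matrix Kronecker BigOperators

/-- Identifiability of the column covariance matrices `Σ_0, ..., Σ_K` from the covariance
`∑_k Σ_k ⊗ D_k` of `vec(Y)`: any two tuples of symmetric matrices producing the same
covariance must coincide. -/
def Identifiable {n q K : ℕ} (D : Fin (K + 1) → Matrix (Fin n) (Fin n) ℝ) : Prop :=
  ∀ Sig Sig' : Fin (K + 1) → Matrix (Fin q) (Fin q) ℝ,
    (∀ k, (Sig k).IsSymm) → (∀ k, (Sig' k).IsSymm) →
    ∑ k, Sig k ⊗ₖ D k = ∑ k, Sig' k ⊗ₖ D k → ∀ k, Sig k = Sig' k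

namespace Matrix

variable {R ι l m n p : Type*} [Fintype ι]

theorem submatrix_sum_kronecker_prodMk [CommSemiring R] (S : ι → Matrix l m R)
    (D : ι → Matrix n p R) (i : l) (j : m) :
    (∑ k, S k ⊗ₖ D k).submatrix (Prod.mk i) (Prod.mk j) = ∑ k, S k i j • D k := by
  ext a b
  simp only [submatrix_apply, sum_apply, kroneckerMap_apply, smul_apply, smul_eq_mul]

theorem sum_smul_kronecker [CommSemiring R] (c : ι → R) (A : Matrix l m R)
    (D : ι → Matrix n p R) :
    ∑ k, (c k • A) ⊗ₖ D k = A ⊗ₖ ∑ k, c k • D k := by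
  ext ⟨i, a⟩ ⟨j, b⟩
  simp only [sum_apply, kroneckerMap_apply, smul_apply, smul_eq_mul, Finset.mul_sum]
  exact Finset.sum_congr rfl fun k _ => by ring

theorem sum_kronecker_injective [CommSemiring R] {D : ι → Matrix n p R}
    (hD : LinearIndependent R D) :
    Function.Injective fun S : ι → Matrix l m R => ∑ k, S k ⊗ₖ D k := by
  intro S S' h
  ext k i j
  have hblock := congrArg (submatrix · (Prod.mk i) (Prod.mk j)) h
  simp only [submatrix_sum_kronecker_prodMk] at hblock
  exact Fintype.linearIndependent_iffₛ.mp hD _ _ hblock k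

end Matrix

theorem Identifiable.of_linearIndependent {n q K : ℕ}
    {D : Fin (K + 1) → Matrix (Fin n) (Fin n) ℝ} (hD : LinearIndependent ℝ D) :
    Identifiable (q := q) D :=
  fun _ _ _ _ h => congrFun (sum_kronecker_injective hD h)

theorem Identifiable.linearIndependent {n q K : ℕ} [NeZero q]
    {D : Fin (K + 1) → Matrix (Fin n) (Fin n) ℝ} (hD : Identifiable (q := q) D) :
    LinearIndependent ℝ D := by
  refine Fintype.linearIndependent_iffₛ.mpr fun c c' h k => ?_
  have hsymm (a : Fin (K + 1) → ℝ) (k) : (a k • (1 : Matrix (Fin q) (Fin q) ℝ)).IsSymm :=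
    isSymm_one.smul _
  have hcov :
      ∑ k, (c k • (1 : Matrix (Fin q) (Fin q) ℝ)) ⊗ₖ D k = ∑ k, (c' k • 1) ⊗ₖ D k := by
    rw [sum_smul_kronecker, sum_smul_kronecker, h]
  exact smul_left_injective ℝ one_ne_zero (hD _ _ (hsymm c) (hsymm c') hcov k)

theorem stmt6_general {n q K : ℕ} (hq : 0 < q)
    (D : Fin (K + 1) → Matrix (Fin n) (Fin n) ℝ) :
    (Identifiable (q := q) D ↔ LinearIndependent ℝ D) ∧
    (1 ≤ K → (∀ k k', D k = D k') → ¬ Identifiable (q := q) D) := by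
  have : NeZero q := ⟨hq.ne'⟩
  have hiff : Identifiable (q := q) D ↔ LinearIndependent ℝ D :=
    ⟨Identifiable.linearIndependent, Identifiable.of_linearIndependent⟩
  refine ⟨hiff, fun hK hconst hD => ?_⟩
  obtain ⟨K, rfl⟩ := Nat.exists_eq_add_of_le' hK
  exact zero_ne_one ((hiff.mp hD).injective (hconst 0 1))

/-- in the model `Y = ∑_k Γ_k` with `Γ_k ∼ MN(0, D_k, Σ_k)`, the column
covariances are identifiable from `Cov(vec Y) = ∑_k Σ_k ⊗ D_k` if and only if the
`D_k` are linearly independent; in particular, if `K ≥ 1` and all the `D_k` are equal,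
the individual `Σ_k` are not identifiable (only their sum is). -/
theorem stmt6 {n q K : ℕ} (hq : 0 < q)
    (D : Fin (K + 1) → Matrix (Fin n) (Fin n) ℝ)
    (hDsymm : ∀ k, (D k).IsSymm) (hDne : ∀ k, D k ≠ 0) :
    (Identifiable (q := q) D ↔ LinearIndependent ℝ D) ∧
    (1 ≤ K → (∀ k k', D k = D k') → ¬ Identifiable (q := q) D) :=
  stmt6_general hq D
end
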